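/- arXiv:2304.14733 — 2 statements merged into one kernel-verified Lean document; each statement's English description precedes it below -/
import Mathlib

section
/- Let v ∈ S_d, and for α ≥ 2 an integer set λ := 1 + d(α-1) and a_n^{(1)}(v) := g_0^v(S_{n+d-1})/(n+d-1)!. Then for all k ∈ ℕ: |a_{αkd}^{(1)}(v) - (a_λ^{(1)}(v))^k| ≤ (k+2) · (a_λ^{(1)}(v))^{k-1}. -/
/-!
An avoiding permutation of length `M + N` is determined by the set of values on its first `M`
positions together with the standardizations `(Tuple.sort _).symm` of its two blocks, and these
again avoid the pattern. Hence `g(M + N) ≤ C(M + N, M) g(M) g(N)`: the avoidance probability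
`b n = g_0(S_n) / n!` is submultiplicative and, taking `N = 1`, nonincreasing. With
`a_m = b (m + d - 1)` and `a_λ = b (αd)`, both `a_{αkd} ≤ b ((k - 1) αd) ≤ a_λ ^ (k - 1)` and
`a_λ ^ k` lie in `[0, a_λ ^ (k - 1)]`, so their distance is at most `a_λ ^ (k - 1)`.
-/

open Finset MeasureTheory Polynomial

attribute [local instance] Classical.propDecidable

/-- `w` (restricted to positions `i, i+1, ..., i+d-1`) is a consecutive occurrence of the
pattern `v` (whose entries are `v 0, ..., v (d-1)`), i.e. the window is order-isomorphic
(respecting equalities) to the pattern. -/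
def consecOcc {α : Type*} [LinearOrder α] (d : ℕ) (v : ℕ → ℕ) (w : ℕ → α) (i : ℕ) : Prop :=
  ∀ p q, p < d → q < d →
    ((w (i + p) < w (i + q) ↔ v p < v q) ∧ (w (i + p) = w (i + q) ↔ v p = v q))

/-- number of consecutive occurrences of the pattern `v` of length `d` in the word `w`
of length `n`. -/
noncomputable def conCount {α : Type*} [LinearOrder α] (d n : ℕ) (v : ℕ → ℕ) (w : ℕ → α) : ℕ :=
  ((Finset.range n).filter (fun i => i + d ≤ n ∧ consecOcc d v w i)).card

/-- the word (ℕ-valued, 0-indexed) associated with a permutation of `Fin n`. -/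
def permWord {n : ℕ} (σ : Equiv.Perm (Fin n)) : ℕ → ℕ :=
  fun j => if h : j < n then (σ ⟨j, h⟩ : ℕ) else 0

/-- `g_r^v(S_n)`: number of permutations of length `n` with exactly `r` consecutive
occurrences of the pattern `v` (of length `d`). -/
noncomputable def gPerm (d : ℕ) (v : ℕ → ℕ) (n r : ℕ) : ℕ :=
  Nat.card {σ : Equiv.Perm (Fin n) // conCount d n v (permWord σ) = r}

/-- the word (ℕ-valued, 0-indexed) associated with a `k`-ary word of length `n`. -/
def wordFn {k n : ℕ} (w : Fin n → Fin k) : ℕ → ℕ :=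
  fun j => if h : j < n then (w ⟨j, h⟩ : ℕ) else 0

/-- `g_r^v([k]^n)`: number of `k`-ary words of length `n` with exactly `r` consecutive
occurrences of the pattern `v` (of length `d`). -/
noncomputable def gWord (d k n r : ℕ) (v : ℕ → ℕ) : ℕ :=
  Nat.card {w : Fin n → Fin k // conCount d n v (wordFn w) = r}

/-- `i` is in the overlap set `O_v` of the pattern `v` of length `d`:
`1 ≤ i < d` and the first `i` entries have the same relative order as the last `i` entries. -/
def inOverlap (d : ℕ) (v : ℕ → ℕ) (i : ℕ) : Prop :=
  1 ≤ i ∧ i < d ∧ ∀ p q, p < i → q < i → (v p < v q ↔ v (d - i + p) < v (d - i + q))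

open Function

section Standardization

variable {β : Type*} [LinearOrder β] {m : ℕ}

theorem Tuple.strictMono_comp_sort {f : Fin m → β} (hf : Injective f) :
    StrictMono (f ∘ Tuple.sort f) :=
  (Tuple.monotone_sort f).strictMono_of_injective (hf.comp (Tuple.sort f).injective)

theorem Tuple.sort_symm_lt_sort_symm_iff {f : Fin m → β} (hf : Injective f) (i j : Fin m) :
    (Tuple.sort f).symm i < (Tuple.sort f).symm j ↔ f i < f j := by
  simpa using ((Tuple.strictMono_comp_sort hf).lt_iff_lt
    (a := (Tuple.sort f).symm i) (b := (Tuple.sort f).symm j)).symm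

theorem Tuple.eq_of_range_eq_of_sort_eq {f g : Fin m → β} (hf : Injective f) (hg : Injective g)
    (hrange : Set.range f = Set.range g) (hsort : Tuple.sort f = Tuple.sort g) : f = g := by
  have hcomp : f ∘ Tuple.sort f = g ∘ Tuple.sort g := by
    rw [← (Tuple.strictMono_comp_sort hf).range_inj (Tuple.strictMono_comp_sort hg),
      EquivLike.range_comp, EquivLike.range_comp, hrange]
  rw [hsort] at hcomp
  exact (Tuple.sort g).surjective.injective_comp_right hcomp

end Standardization

theorem Fin.range_natAdd_eq_compl_range_castAdd (M N : ℕ) :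
    Set.range (Fin.natAdd M : Fin N → Fin (M + N)) =
      (Set.range (Fin.castAdd N : Fin M → Fin (M + N)))ᶜ := by
  ext x
  simp only [Fin.range_natAdd, Set.mem_ofPred_eq, Set.mem_compl_iff, Set.mem_range, not_exists]
  constructor
  · rintro hx y rfl
    exact (Nat.not_le.mpr y.isLt) (by simpa using hx)
  · intro hx
    by_contra! hlt
    exact hx ⟨x, hlt⟩ rfl

theorem consecOcc_iff_of_lt_iff {β γ : Type*} [LinearOrder β] [LinearOrder γ] {d : ℕ}
    {u : ℕ → ℕ} {w : ℕ → β} {w' : ℕ → γ} {i j : ℕ}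
    (hlt : ∀ p q, p < d → q < d → (w (i + p) < w (i + q) ↔ w' (j + p) < w' (j + q))) :
    consecOcc d u w i ↔ consecOcc d u w' j := by
  have heq : ∀ p q, p < d → q < d → (w (i + p) = w (i + q) ↔ w' (j + p) = w' (j + q)) := by
    intro p q hp hq
    rw [le_antisymm_iff, le_antisymm_iff, ← not_lt, ← not_lt, ← not_lt, ← not_lt,
      hlt p q hp hq, hlt q p hq hp]
  unfold consecOcc
  refine forall₄_congr fun p q hp hq => ?_
  rw [hlt p q hp hq, heq p q hp hq]

theorem conCount_eq_zero_of_window {β γ : Type*} [LinearOrder β] [LinearOrder γ]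
    {d n m s : ℕ} {u : ℕ → ℕ} {w : ℕ → β} {w' : ℕ → γ} (hs : s + m ≤ n)
    (hlt : ∀ p q, p < m → q < m → (w (s + p) < w (s + q) ↔ w' p < w' q))
    (h : conCount d n u w = 0) : conCount d m u w' = 0 := by
  simp only [conCount, Finset.card_eq_zero, Finset.filter_eq_empty_iff, Finset.mem_range,
    not_and] at h ⊢
  intro i hi hid hocc
  refine h (x := s + i) (by omega) (by omega)
    ((consecOcc_iff_of_lt_iff fun p q hp hq => ?_).mpr hocc)
  simpa only [add_assoc] using hlt (i + p) (i + q) (by omega) (by omega)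

theorem permWord_lt_permWord_iff {n p q : ℕ} (σ : Equiv.Perm (Fin n)) (hp : p < n) (hq : q < n) :
    permWord σ p < permWord σ q ↔ σ ⟨p, hp⟩ < σ ⟨q, hq⟩ := by
  simp only [permWord, hp, hq, dite_true, Fin.lt_def]

theorem conCount_sort_symm_eq_zero {d n m : ℕ} {u : ℕ → ℕ} (σ : Equiv.Perm (Fin n)) (s : ℕ)
    (hs : s + m ≤ n) (e : Fin m → Fin n) (he : ∀ i, (e i : ℕ) = s + i)
    (h : conCount d n u (permWord σ) = 0) :
    conCount d m u (permWord (Tuple.sort (σ ∘ e)).symm) = 0 := by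
  have he_inj : Injective e := fun i j hij => Fin.ext (by simpa [he] using congrArg Fin.val hij)
  have he' : ∀ r (hr : r < m), e ⟨r, hr⟩ = ⟨s + r, by omega⟩ := fun r hr => Fin.ext (he _)
  refine conCount_eq_zero_of_window hs (fun p q hp hq => ?_) h
  rw [permWord_lt_permWord_iff σ (by omega) (by omega), permWord_lt_permWord_iff _ hp hq,
    Tuple.sort_symm_lt_sort_symm_iff (σ.injective.comp he_inj), comp_apply, comp_apply, he', he']

theorem Equiv.Perm.range_comp_natAdd {M N : ℕ} (σ : Equiv.Perm (Fin (M + N))) :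
    Set.range (σ ∘ Fin.natAdd M) = (Set.range (σ ∘ Fin.castAdd N))ᶜ := by
  rw [Set.range_comp, Set.range_comp, Fin.range_natAdd_eq_compl_range_castAdd,
    Set.image_compl_eq σ.bijective]

theorem gPerm_add_le (d : ℕ) (u : ℕ → ℕ) (M N : ℕ) :
    gPerm d u (M + N) 0 ≤ (M + N).choose M * (gPerm d u M 0 * gPerm d u N 0) := by
  let split (σ : {σ : Equiv.Perm (Fin (M + N)) // conCount d (M + N) u (permWord σ) = 0}) :
      {s : Finset (Fin (M + N)) // s.card = M} ×
        {τ : Equiv.Perm (Fin M) // conCount d M u (permWord τ) = 0} ×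
        {ρ : Equiv.Perm (Fin N) // conCount d N u (permWord ρ) = 0} :=
    (⟨Finset.univ.image (σ.1 ∘ Fin.castAdd N), by
        rw [Finset.card_image_of_injective _ (σ.1.injective.comp (Fin.castAdd_injective M N)),
          Finset.card_univ, Fintype.card_fin]⟩,
      ⟨(Tuple.sort (σ.1 ∘ Fin.castAdd N)).symm,
        conCount_sort_symm_eq_zero σ.1 0 (by omega) _ (fun i => by simp) σ.2⟩,
      ⟨(Tuple.sort (σ.1 ∘ Fin.natAdd M)).symm,
        conCount_sort_symm_eq_zero σ.1 M le_rfl _ (fun i => rfl) σ.2⟩)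
  have hsplit : Function.Injective split := by
    rintro ⟨σ₁, _⟩ ⟨σ₂, _⟩ h
    obtain ⟨himage, hsort₁, hsort₂⟩ : _ ∧ _ ∧ _ := by
      simpa only [split, Prod.mk.injEq, Subtype.mk.injEq, Equiv.symm_bijective.injective.eq_iff]
        using h
    have hrange : Set.range (σ₁ ∘ Fin.castAdd N) = Set.range (σ₂ ∘ Fin.castAdd N) := by
      rw [← Set.image_univ, ← Set.image_univ, ← Finset.coe_univ, ← Finset.coe_image,
        ← Finset.coe_image, himage]
    have h₁ := Tuple.eq_of_range_eq_of_sort_eq (σ₁.injective.comp (Fin.castAdd_injective M N))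
      (σ₂.injective.comp (Fin.castAdd_injective M N)) hrange hsort₁
    have h₂ := Tuple.eq_of_range_eq_of_sort_eq (σ₁.injective.comp (Fin.natAdd_injective N M))
      (σ₂.injective.comp (Fin.natAdd_injective N M))
      (by rw [σ₁.range_comp_natAdd, σ₂.range_comp_natAdd, hrange]) hsort₂
    exact Subtype.ext (Equiv.ext fun x => Fin.addCases (congrFun h₁) (congrFun h₂) x)
  simpa [gPerm, Nat.card_prod, Nat.card_eq_fintype_card, Fintype.card_finset_len] using
    Nat.card_le_card_of_injective split hsplit

theorem gPerm_zero_le_factorial (d : ℕ) (u : ℕ → ℕ) (n : ℕ) : gPerm d u n 0 ≤ n.factorial := by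
  rw [gPerm, Nat.card_eq_fintype_card]
  exact (Fintype.card_subtype_le _).trans (by simp [Fintype.card_perm])

noncomputable def avoidProb (d : ℕ) (u : ℕ → ℕ) (n : ℕ) : ℝ :=
  gPerm d u n 0 / n.factorial

section avoidProb

variable (d : ℕ) (u : ℕ → ℕ)

theorem avoidProb_nonneg (n : ℕ) : 0 ≤ avoidProb d u n := by
  unfold avoidProb; positivity

theorem avoidProb_le_one (n : ℕ) : avoidProb d u n ≤ 1 :=
  div_le_one_of_le₀ (by exact_mod_cast gPerm_zero_le_factorial d u n) (by positivity)

theorem avoidProb_add_le (M N : ℕ) :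
    avoidProb d u (M + N) ≤ avoidProb d u M * avoidProb d u N := by
  have hchoose : ((M + N).choose M : ℝ) * M.factorial * N.factorial = (M + N).factorial := by
    rw [Nat.choose_symm_add]
    exact_mod_cast Nat.add_choose_mul_factorial_mul_factorial M N
  unfold avoidProb
  rw [div_mul_div_comm, div_le_div_iff₀ (by positivity) (by positivity), ← hchoose]
  calc (gPerm d u (M + N) 0 : ℝ) * (M.factorial * N.factorial)
      ≤ (M + N).choose M * (gPerm d u M 0 * gPerm d u N 0) * (M.factorial * N.factorial) := by
        gcongr; exact_mod_cast gPerm_add_le d u M N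
    _ = gPerm d u M 0 * gPerm d u N 0 * ((M + N).choose M * M.factorial * N.factorial) := by ring

theorem avoidProb_antitone : Antitone (avoidProb d u) :=
  antitone_nat_of_succ_le fun n =>
    (avoidProb_add_le d u n 1).trans
      (mul_le_of_le_one_right (avoidProb_nonneg d u n) (avoidProb_le_one d u 1))

theorem avoidProb_mul_le_pow (n j : ℕ) : avoidProb d u (j * n) ≤ avoidProb d u n ^ j := by
  induction j with
  | zero => simpa using avoidProb_le_one d u 0
  | succ j ih =>
    calc avoidProb d u ((j + 1) * n) ≤ avoidProb d u (j * n) * avoidProb d u n := by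
          rw [add_one_mul]; exact avoidProb_add_le d u _ _
      _ ≤ avoidProb d u n ^ j * avoidProb d u n := by
          gcongr; exact avoidProb_nonneg d u n
      _ = avoidProb d u n ^ (j + 1) := (pow_succ _ _).symm

end avoidProb

theorem a_block_power_estimate_general (d : ℕ) (v : Equiv.Perm (Fin d))
    (α : ℕ) (hα : 2 ≤ α)
    (a : ℕ → ℝ)
    (ha : ∀ m : ℕ, a m =
      (gPerm d (permWord v) (m + d - 1) 0 : ℝ) / (Nat.factorial (m + d - 1)))
    (k : ℕ) :
    |a (α * k * d) - (a (1 + d * (α - 1))) ^ k| ≤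
      ((k : ℝ) + 2) * (a (1 + d * (α - 1))) ^ (k - 1) := by
  set b := avoidProb d (permWord v)
  have hL : a (1 + d * (α - 1)) = b (α * d) := by
    have hdα : d ≤ d * α := Nat.le_mul_of_pos_right d (by omega)
    rw [ha, Nat.mul_sub_one, mul_comm α d]
    congr 3 <;> omega
  have hblock : a (α * k * d) ≤ b (α * d) ^ (k - 1) := by
    have hle : (k - 1) * (α * d) ≤ α * k * d + d - 1 := by
      rcases Nat.eq_zero_or_pos d with rfl | hd
      · simp
      calc (k - 1) * (α * d) ≤ k * (α * d) := Nat.mul_le_mul_right _ (Nat.sub_le k 1)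
        _ = α * k * d := by ring
        _ ≤ α * k * d + d - 1 := by omega
    calc a (α * k * d) = b (α * k * d + d - 1) := ha _
      _ ≤ b ((k - 1) * (α * d)) := avoidProb_antitone d _ hle
      _ ≤ b (α * d) ^ (k - 1) := avoidProb_mul_le_pow d _ _ _
  have hpow : b (α * d) ^ k ≤ b (α * d) ^ (k - 1) :=
    pow_le_pow_of_le_one (avoidProb_nonneg d _ _) (avoidProb_le_one d _ _) (Nat.sub_le k 1)
  rw [hL]
  calc |a (α * k * d) - b (α * d) ^ k| ≤ b (α * d) ^ (k - 1) :=
        abs_sub_le_of_nonneg_of_le (by rw [ha]; positivity) hblock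
          (pow_nonneg (avoidProb_nonneg d _ _) k) hpow
    _ ≤ ((k : ℝ) + 2) * b (α * d) ^ (k - 1) :=
        le_mul_of_one_le_left (pow_nonneg (avoidProb_nonneg d _ _) _)
          (by linarith [k.cast_nonneg (α := ℝ)])

/-- For any `v ∈ S_d`, integer `α ≥ 2`, `λ = 1 + d(α-1)`, and
`a_n^{(1)}(v) = g_0^v(S_{n+d-1})/(n+d-1)!`:
`|a_{αkd}^{(1)}(v) - (a_λ^{(1)}(v))^k| ≤ (k+2) (a_λ^{(1)}(v))^{k-1}` for all `k ∈ ℕ`. -/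
theorem a_block_power_estimate (d : ℕ) (hd : 1 ≤ d) (v : Equiv.Perm (Fin d))
    (α : ℕ) (hα : 2 ≤ α)
    (a : ℕ → ℝ)
    (ha : ∀ m : ℕ, a m =
      (gPerm d (permWord v) (m + d - 1) 0 : ℝ) / (Nat.factorial (m + d - 1)))
    (k : ℕ) (hk : 1 ≤ k) :
    |a (α * k * d) - (a (1 + d * (α - 1))) ^ k| ≤
      ((k : ℝ) + 2) * (a (1 + d * (α - 1))) ^ (k - 1) :=
  a_block_power_estimate_general d v α hα a ha k
end

section
/- Let v ∈ S_d and suppose the limit ρ_v := lim_n (g_0^v(S_n)/n!)^{1/n} exists. Then for every integer α ≥ 2: ρ_v ≤ (g_0^v(S_{αd})/(αd)!)^{1/(αd)}. -/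
open Finset MeasureTheory Polynomial

attribute [local instance] Classical.propDecidable

lemma consecOcc_congr {α β : Type*} [LinearOrder α] [LinearOrder β] {d : ℕ} {v : ℕ → ℕ}
    {w : ℕ → α} {w' : ℕ → β} {i i' : ℕ}
    (h : ∀ p q, p < d → q < d →
      ((w (i + p) < w (i + q) ↔ w' (i' + p) < w' (i' + q)) ∧
       (w (i + p) = w (i + q) ↔ w' (i' + p) = w' (i' + q)))) :
    consecOcc d v w i ↔ consecOcc d v w' i' := by
  constructor <;> intro H p q hp hq <;>
    obtain ⟨h1, h2⟩ := h p q hp hq <;> obtain ⟨H1, H2⟩ := H p q hp hq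
  · exact ⟨h1.symm.trans H1, h2.symm.trans H2⟩
  · exact ⟨h1.trans H1, h2.trans H2⟩

noncomputable def pimg {m N : ℕ} (w : Fin m → Fin N) : Finset (Fin N) :=
  Finset.image w Finset.univ

lemma pimg_card {m N : ℕ} (w : Fin m → Fin N) (hw : Function.Injective w) :
    (pimg w).card = m := by
  rw [pimg, Finset.card_image_of_injective _ hw, Finset.card_univ, Fintype.card_fin]

noncomputable def pattFun {m N : ℕ} (w : Fin m → Fin N) (hw : Function.Injective w) :
    Fin m → Fin m := fun i =>
  ((pimg w).orderIsoOfFin (pimg_card w hw)).symm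
    ⟨w i, Finset.mem_image_of_mem _ (Finset.mem_univ i)⟩

lemma pattFun_lt_iff {m N : ℕ} (w : Fin m → Fin N) (hw : Function.Injective w) (a b : Fin m) :
    pattFun w hw a < pattFun w hw b ↔ w a < w b := by
  simp only [pattFun]
  rw [OrderIso.lt_iff_lt]
  exact Subtype.mk_lt_mk

lemma pattFun_inj {m N : ℕ} (w : Fin m → Fin N) (hw : Function.Injective w) :
    Function.Injective (pattFun w hw) := by
  intro a b h
  apply hw
  have := ((pimg w).orderIsoOfFin (pimg_card w hw)).symm.injective h
  exact congrArg Subtype.val this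

noncomputable def patt {m N : ℕ} (w : Fin m → Fin N) (hw : Function.Injective w) :
    Equiv.Perm (Fin m) :=
  Equiv.ofBijective (pattFun w hw) (Finite.injective_iff_bijective.mp (pattFun_inj w hw))

lemma patt_apply {m N : ℕ} (w : Fin m → Fin N) (hw : Function.Injective w) (i : Fin m) :
    patt w hw i = pattFun w hw i := rfl

lemma patt_lt_iff {m N : ℕ} (w : Fin m → Fin N) (hw : Function.Injective w) (a b : Fin m) :
    patt w hw a < patt w hw b ↔ w a < w b :=
  pattFun_lt_iff w hw a b

lemma patt_recon {m N : ℕ} (w : Fin m → Fin N) (hw : Function.Injective w) (i : Fin m) :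
    ((pimg w).orderIsoOfFin (pimg_card w hw) (patt w hw i) : Fin N) = w i := by
  rw [patt_apply]
  simp only [pattFun]
  rw [OrderIso.apply_symm_apply]

lemma orderIsoOfFin_congr {α : Type*} [LinearOrder α] {s t : Finset α} {k : ℕ}
    (hst : s = t) (hs : s.card = k) (ht : t.card = k) (x : Fin k) :
    (s.orderIsoOfFin hs x : α) = (t.orderIsoOfFin ht x : α) := by
  subst hst; rfl

lemma injL {m n : ℕ} (σ : Equiv.Perm (Fin (m + n))) :
    Function.Injective (fun j : Fin m => σ (Fin.castAdd n j)) := by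
  intro a b h
  have := σ.injective h
  exact Fin.ext (by simpa using congrArg Fin.val this)

lemma injR {m n : ℕ} (σ : Equiv.Perm (Fin (m + n))) :
    Function.Injective (fun j : Fin n => σ (Fin.natAdd m j)) := by
  intro a b h
  have := σ.injective h
  have := congrArg Fin.val this
  simp [Fin.coe_natAdd] at this
  exact Fin.ext (by omega)

lemma avoidL {d m n : ℕ} {v : ℕ → ℕ} (σ : Equiv.Perm (Fin (m + n)))
    (hσ : conCount d (m + n) v (permWord σ) = 0) :
    conCount d m v (permWord (patt (fun j : Fin m => σ (Fin.castAdd n j)) (injL σ))) = 0 := by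
  set τ := patt (fun j : Fin m => σ (Fin.castAdd n j)) (injL σ) with hτ
  rw [conCount, Finset.card_eq_zero, Finset.filter_eq_empty_iff] at hσ ⊢
  rintro i hi ⟨hid, hocc⟩
  rw [Finset.mem_range] at hi
  refine hσ (show i ∈ Finset.range (m + n) from Finset.mem_range.mpr (by omega)) ⟨by omega, ?_⟩
  refine (consecOcc_congr ?_).mp hocc
  intro p q hp hq
  have hipm : i + p < m := by omega
  have hiqm : i + q < m := by omega
  have hipmn : i + p < m + n := by omega
  have hiqmn : i + q < m + n := by omega
  have e1 : permWord τ (i + p) = (τ ⟨i + p, hipm⟩ : ℕ) := by rw [permWord, dif_pos hipm]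
  have e2 : permWord τ (i + q) = (τ ⟨i + q, hiqm⟩ : ℕ) := by rw [permWord, dif_pos hiqm]
  have e3 : permWord σ (i + p) = (σ ⟨i + p, hipmn⟩ : ℕ) := by rw [permWord, dif_pos hipmn]
  have e4 : permWord σ (i + q) = (σ ⟨i + q, hiqmn⟩ : ℕ) := by rw [permWord, dif_pos hiqmn]
  rw [e1, e2, e3, e4]
  have hca1 : Fin.castAdd n (⟨i + p, hipm⟩ : Fin m) = ⟨i + p, hipmn⟩ := rfl
  have hca2 : Fin.castAdd n (⟨i + q, hiqm⟩ : Fin m) = ⟨i + q, hiqmn⟩ := rfl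
  constructor
  · rw [← Fin.lt_def, ← Fin.lt_def, hτ, patt_lt_iff]
    simp only [hca1, hca2]
  · constructor
    · intro h
      have h2 : τ ⟨i + p, hipm⟩ = τ ⟨i + q, hiqm⟩ := Fin.ext h
      have h3 := τ.injective h2
      rw [Fin.mk.injEq] at h3
      have h4 : (⟨i + p, hipmn⟩ : Fin (m + n)) = ⟨i + q, hiqmn⟩ := by simp only [Fin.mk.injEq]; omega
      rw [h4]
    · intro h
      have h2 : σ ⟨i + p, hipmn⟩ = σ ⟨i + q, hiqmn⟩ := Fin.ext h
      have h3 := σ.injective h2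
      rw [Fin.mk.injEq] at h3
      have h4 : (⟨i + p, hipm⟩ : Fin m) = ⟨i + q, hiqm⟩ := by simp only [Fin.mk.injEq]; omega
      rw [h4]

lemma avoidR {d m n : ℕ} {v : ℕ → ℕ} (σ : Equiv.Perm (Fin (m + n)))
    (hσ : conCount d (m + n) v (permWord σ) = 0) :
    conCount d n v (permWord (patt (fun j : Fin n => σ (Fin.natAdd m j)) (injR σ))) = 0 := by
  set τ := patt (fun j : Fin n => σ (Fin.natAdd m j)) (injR σ) with hτ
  rw [conCount, Finset.card_eq_zero, Finset.filter_eq_empty_iff] at hσ ⊢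
  rintro i hi ⟨hid, hocc⟩
  rw [Finset.mem_range] at hi
  refine hσ (show m + i ∈ Finset.range (m + n) from Finset.mem_range.mpr (by omega)) ⟨by omega, ?_⟩
  refine (consecOcc_congr ?_).mp hocc
  intro p q hp hq
  have hipn : i + p < n := by omega
  have hiqn : i + q < n := by omega
  have hipmn : m + i + p < m + n := by omega
  have hiqmn : m + i + q < m + n := by omega
  have e1 : permWord τ (i + p) = (τ ⟨i + p, hipn⟩ : ℕ) := by rw [permWord, dif_pos hipn]
  have e2 : permWord τ (i + q) = (τ ⟨i + q, hiqn⟩ : ℕ) := by rw [permWord, dif_pos hiqn]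
  have e3 : permWord σ (m + i + p) = (σ ⟨m + i + p, hipmn⟩ : ℕ) := by
    rw [permWord, dif_pos hipmn]
  have e4 : permWord σ (m + i + q) = (σ ⟨m + i + q, hiqmn⟩ : ℕ) := by
    rw [permWord, dif_pos hiqmn]
  rw [e1, e2, e3, e4]
  have hca1 : Fin.natAdd m (⟨i + p, hipn⟩ : Fin n) = ⟨m + i + p, hipmn⟩ :=
    Fin.ext (by simp [Fin.coe_natAdd]; omega)
  have hca2 : Fin.natAdd m (⟨i + q, hiqn⟩ : Fin n) = ⟨m + i + q, hiqmn⟩ :=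
    Fin.ext (by simp [Fin.coe_natAdd]; omega)
  constructor
  · rw [← Fin.lt_def, ← Fin.lt_def, hτ, patt_lt_iff]
    simp only [hca1, hca2]
  · constructor
    · intro h
      have h2 : τ ⟨i + p, hipn⟩ = τ ⟨i + q, hiqn⟩ := Fin.ext h
      have h3 := τ.injective h2
      rw [Fin.mk.injEq] at h3
      have h4 : (⟨m + i + p, hipmn⟩ : Fin (m + n)) = ⟨m + i + q, hiqmn⟩ := by simp only [Fin.mk.injEq]; omega
      rw [h4]
    · intro h
      have h2 : σ ⟨m + i + p, hipmn⟩ = σ ⟨m + i + q, hiqmn⟩ := Fin.ext h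
      have h3 := σ.injective h2
      rw [Fin.mk.injEq] at h3
      have h4 : (⟨i + p, hipn⟩ : Fin n) = ⟨i + q, hiqn⟩ := by simp only [Fin.mk.injEq]; omega
      rw [h4]

lemma pimg_compl {m n : ℕ} (σ : Equiv.Perm (Fin (m + n))) :
    pimg (fun j : Fin n => σ (Fin.natAdd m j)) =
      (pimg (fun j : Fin m => σ (Fin.castAdd n j)))ᶜ := by
  ext x
  simp only [pimg, Finset.mem_compl, Finset.mem_image, Finset.mem_univ, true_and]
  constructor
  · rintro ⟨j, rfl⟩ ⟨i, hi⟩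
    have := congrArg Fin.val (σ.injective hi)
    simp [Fin.coe_natAdd, Fin.coe_castAdd] at this
    omega
  · intro hx
    obtain ⟨y, rfl⟩ : ∃ y, σ y = x := ⟨σ.symm x, σ.apply_symm_apply x⟩
    by_cases hy : (y : ℕ) < m
    · exact absurd ⟨⟨y, hy⟩, by congr 1⟩ hx
    · have hyn : (y : ℕ) - m < n := by omega
      refine ⟨⟨(y : ℕ) - m, hyn⟩, ?_⟩
      congr 1
      exact Fin.ext (by simp [Fin.coe_natAdd]; omega)

lemma gPerm_submul (d m n : ℕ) (v : ℕ → ℕ) :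
    gPerm d v (m + n) 0 ≤ (m + n).choose m * (gPerm d v m 0 * gPerm d v n 0) := by
  classical
  rw [gPerm, gPerm, gPerm]
  have key : Nat.card {σ : Equiv.Perm (Fin (m + n)) // conCount d (m + n) v (permWord σ) = 0}
      ≤ Nat.card ({A : Finset (Fin (m + n)) // A.card = m} ×
        ({τ : Equiv.Perm (Fin m) // conCount d m v (permWord τ) = 0} ×
         {τ : Equiv.Perm (Fin n) // conCount d n v (permWord τ) = 0})) := by
    apply Nat.card_le_card_of_injective (fun σ =>
      (⟨pimg (fun j : Fin m => σ.1 (Fin.castAdd n j)), pimg_card _ (injL σ.1)⟩,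
       ⟨patt _ (injL σ.1), avoidL σ.1 σ.2⟩,
       ⟨patt _ (injR σ.1), avoidR σ.1 σ.2⟩))
    intro σ σ' h
    simp only [Prod.mk.injEq, Subtype.mk.injEq] at h
    obtain ⟨hA, h1, h2⟩ := h
    apply Subtype.ext
    apply Equiv.ext
    intro x
    refine Fin.addCases ?_ ?_ x
    · intro j
      show σ.1 (Fin.castAdd n j) = σ'.1 (Fin.castAdd n j)
      rw [(patt_recon (fun j : Fin m => σ.1 (Fin.castAdd n j)) (injL σ.1) j).symm,
        (patt_recon (fun j : Fin m => σ'.1 (Fin.castAdd n j)) (injL σ'.1) j).symm]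
      rw [h1]
      exact orderIsoOfFin_congr hA _ _ _
    · intro j
      show σ.1 (Fin.natAdd m j) = σ'.1 (Fin.natAdd m j)
      rw [(patt_recon (fun j : Fin n => σ.1 (Fin.natAdd m j)) (injR σ.1) j).symm,
        (patt_recon (fun j : Fin n => σ'.1 (Fin.natAdd m j)) (injR σ'.1) j).symm]
      rw [h2]
      exact orderIsoOfFin_congr (by rw [pimg_compl, pimg_compl, hA]) _ _ _
  refine key.trans ?_
  rw [Nat.card_prod, Nat.card_prod]
  rw [Nat.card_eq_fintype_card (α := {A : Finset (Fin (m + n)) // A.card = m})]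
  rw [Fintype.card_finset_len, Fintype.card_fin]

lemma bval_nonneg (d N : ℕ) (v : ℕ → ℕ) :
    0 ≤ (gPerm d v N 0 : ℝ) / N.factorial := by positivity

lemma bval_submul (d m n : ℕ) (v : ℕ → ℕ) :
    (gPerm d v (m + n) 0 : ℝ) / (m + n).factorial ≤
      ((gPerm d v m 0 : ℝ) / m.factorial) * ((gPerm d v n 0 : ℝ) / n.factorial) := by
  have hkey := gPerm_submul d m n v
  have hfm : (0 : ℝ) < m.factorial := by exact_mod_cast m.factorial_pos
  have hfn : (0 : ℝ) < n.factorial := by exact_mod_cast n.factorial_pos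
  have hfmn : (0 : ℝ) < (m + n).factorial := by exact_mod_cast (m + n).factorial_pos
  rw [div_mul_div_comm, div_le_div_iff₀ hfmn (by positivity)]
  have h2 : (gPerm d v (m + n) 0 : ℝ) ≤ ((m + n).choose m : ℝ) *
      ((gPerm d v m 0 : ℝ) * (gPerm d v n 0 : ℝ)) := by exact_mod_cast hkey
  have h := Nat.choose_mul_factorial_mul_factorial (Nat.le_add_right m n)
  rw [Nat.add_sub_cancel_left] at h
  have h3 : ((m + n).choose m : ℝ) * m.factorial * n.factorial = (m + n).factorial := by
    exact_mod_cast congrArg (Nat.cast : ℕ → ℝ) h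
  calc (gPerm d v (m + n) 0 : ℝ) * (m.factorial * n.factorial)
      ≤ (((m + n).choose m : ℝ) * ((gPerm d v m 0 : ℝ) * (gPerm d v n 0 : ℝ))) *
        (m.factorial * n.factorial) := by
        apply mul_le_mul_of_nonneg_right h2 (by positivity)
    _ = ((gPerm d v m 0 : ℝ) * (gPerm d v n 0 : ℝ)) *
        (((m + n).choose m : ℝ) * m.factorial * n.factorial) := by ring
    _ = (gPerm d v m 0 : ℝ) * (gPerm d v n 0 : ℝ) * (m + n).factorial := by rw [h3]

lemma bval_pow (d N : ℕ) (v : ℕ → ℕ) : ∀ k, 1 ≤ k →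
    (gPerm d v (k * N) 0 : ℝ) / (k * N).factorial ≤
      ((gPerm d v N 0 : ℝ) / N.factorial) ^ k := by
  intro k
  induction k with
  | zero => intro h; omega
  | succ k ih =>
    intro _
    by_cases hk : 1 ≤ k
    · have h1 : (k + 1) * N = k * N + N := by ring
      rw [h1, pow_succ]
      calc (gPerm d v (k * N + N) 0 : ℝ) / (k * N + N).factorial
          ≤ ((gPerm d v (k * N) 0 : ℝ) / (k * N).factorial) *
            ((gPerm d v N 0 : ℝ) / N.factorial) := bval_submul d (k * N) N v
        _ ≤ ((gPerm d v N 0 : ℝ) / N.factorial) ^ k *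
            ((gPerm d v N 0 : ℝ) / N.factorial) := by
            apply mul_le_mul_of_nonneg_right (ih hk) (bval_nonneg d N v)
    · have hk0 : k = 0 := by omega
      subst hk0
      simp

/-- If `ρ_v = lim_n (g_0^v(S_n)/n!)^{1/n}` exists, then for every integer `α ≥ 2`,
`ρ_v ≤ (g_0^v(S_{αd})/(αd)!)^{1/(αd)}`. -/
theorem growth_rate_upper_bound (d : ℕ) (hd : 1 ≤ d) (v : Equiv.Perm (Fin d)) (ρ : ℝ)
    (hlim : Filter.Tendsto
      (fun n : ℕ => ((gPerm d (permWord v) n 0 : ℝ) / (Nat.factorial n)) ^ ((n : ℝ)⁻¹))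
      Filter.atTop (nhds ρ))
    (α : ℕ) (hα : 2 ≤ α) :
    ρ ≤ ((gPerm d (permWord v) (α * d) 0 : ℝ) / (Nat.factorial (α * d))) ^
      (((α * d : ℕ) : ℝ)⁻¹) := by
  set N := α * d with hN
  have hN1 : 1 ≤ N := by
    have : 2 * 1 ≤ α * d := Nat.mul_le_mul hα hd
    omega
  set c : ℝ := (gPerm d (permWord v) N 0 : ℝ) / N.factorial with hc
  have hc0 : 0 ≤ c := bval_nonneg d N (permWord v)
  have htop : Filter.Tendsto (fun k : ℕ => k * N) Filter.atTop Filter.atTop := by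
    refine Filter.tendsto_atTop_atTop.mpr fun b => ⟨b, fun a ha => ?_⟩
    calc b ≤ a := ha
      _ ≤ a * N := Nat.le_mul_of_pos_right a (by omega)
  have hsub : Filter.Tendsto
      (fun k : ℕ => ((gPerm d (permWord v) (k * N) 0 : ℝ) / (k * N).factorial) ^
        (((k * N : ℕ) : ℝ)⁻¹)) Filter.atTop (nhds ρ) := hlim.comp htop
  refine le_of_tendsto hsub ?_
  refine Filter.eventually_atTop.mpr ⟨1, fun k hk => ?_⟩
  have hb := bval_pow d N (permWord v) k hk
  have hkN : (0 : ℝ) < ((k * N : ℕ) : ℝ) := by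
    have : 1 ≤ k * N := Nat.one_le_iff_ne_zero.mpr (by positivity)
    exact_mod_cast Nat.lt_of_lt_of_le Nat.zero_lt_one this
  have step1 : ((gPerm d (permWord v) (k * N) 0 : ℝ) / (k * N).factorial) ^
      (((k * N : ℕ) : ℝ)⁻¹) ≤ (c ^ k) ^ (((k * N : ℕ) : ℝ)⁻¹) :=
    Real.rpow_le_rpow (bval_nonneg d (k * N) (permWord v)) hb (by positivity)
  refine step1.trans_eq ?_
  rw [← Real.rpow_natCast c k, ← Real.rpow_mul hc0]
  congr 1
  have hk0 : ((k : ℝ)) ≠ 0 := by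
    have : (1 : ℝ) ≤ (k : ℝ) := by exact_mod_cast hk
    linarith
  have hN0 : ((N : ℝ)) ≠ 0 := by
    have : (1 : ℝ) ≤ (N : ℝ) := by exact_mod_cast hN1
    linarith
  rw [Nat.cast_mul]
  field_simp
end
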